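/- Every non-constant polynomial P on ℝ^n satisfies the s-cone condition with s = deg P; that is, there exist constants C > 0, c₁ > 0, 0 < r₀ < 1 and a sequence of points x_i ∈ ℝ^n with |x_i| ≥ 1 and |x_i| → ∞ such that |P(x)| ≤ C·(|x|+1)^{deg P} for all x ∈ ℝ^n, and for every i and every x ∈ B_{r₀|x_i|}(x_i) one has |P(x)| ≥ c₁·|x|^{deg P}. -/

import Mathlib

open MeasureTheory Real Filter

/-- The s-cone condition: `|ψ(x)| ≤ C(|x|+1)^s` globally, and along a sequence `x_i` with
`|x_i| ≥ 1`, `|x_i| → ∞`, one has `|ψ(x)| ≥ c₁|x|^s` on the balls `B_{r₀|x_i|}(x_i)`. -/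
def SCone (n : ℕ) (ψ : EuclideanSpace ℝ (Fin n) → ℝ) (s : ℝ) : Prop :=
  ∃ (C c₁ r₀ : ℝ) (xs : ℕ → EuclideanSpace ℝ (Fin n)),
    0 < C ∧ 0 < c₁ ∧ 0 < r₀ ∧ r₀ < 1 ∧
    (∀ i, 1 ≤ ‖xs i‖) ∧ Filter.Tendsto (fun i => ‖xs i‖) Filter.atTop Filter.atTop ∧
    (∀ x, |ψ x| ≤ C * (‖x‖ + 1) ^ s) ∧
    (∀ i, ∀ x ∈ Metric.ball (xs i) (r₀ * ‖xs i‖), c₁ * ‖x‖ ^ s ≤ |ψ x|)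

/-!
Write `P = Q + R` with `Q` the homogeneous component of top degree `d`, which is nonzero, and
`deg R ≤ d - 1`. Pick a unit vector `v` with `Q v ≠ 0`. By continuity `|Q| > c` on a ball
`B(v, r₀)`, so by homogeneity `|Q x| ≥ c tᵈ` on every ball `B(t v, r₀ t)`. On these balls
`‖x‖ ≤ 2t` and `|R x| = O(tᵈ⁻¹)`, so `|P x| ≥ c tᵈ / 2 ≥ c ‖x‖ᵈ / 2ᵈ⁺¹` once `t` is large, and
the points `x_i = (T + i) v` do the job. The upper bound comes from bounding each monomial by
`(‖x‖ + 1)ᵈ`.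
-/

open MvPolynomial Metric

namespace MvPolynomial

variable {σ : Type*}

theorem IsHomogeneous.eval_smul {R : Type*} [CommSemiring R] {φ : MvPolynomial σ R} {d : ℕ}
    (hφ : φ.IsHomogeneous d) (r : R) (x : σ → R) : eval (r • x) φ = r ^ d * eval x φ := by
  simp only [eval_eq, Finset.mul_sum]
  refine Finset.sum_congr rfl fun m hm => ?_
  simp only [Pi.smul_apply, smul_eq_mul, mul_pow, Finset.prod_mul_distrib,
    Finset.prod_pow_eq_pow_sum, ← hφ.degree_eq_sum_deg_support hm]
  ring

theorem totalDegree_sub_homogeneousComponent_le {R : Type*} [CommRing R]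
    (φ : MvPolynomial σ R) :
    (φ - homogeneousComponent φ.totalDegree φ).totalDegree ≤ φ.totalDegree - 1 := by
  have h : φ - homogeneousComponent φ.totalDegree φ =
      ∑ i ∈ Finset.range φ.totalDegree, homogeneousComponent i φ := by
    rw [sub_eq_iff_eq_add, ← Finset.sum_range_succ, sum_homogeneousComponent]
  rw [h]
  refine totalDegree_finsetSum_le fun i hi => ?_
  exact (homogeneousComponent_isHomogeneous i φ).totalDegree_le.trans
    (by rw [Finset.mem_range] at hi; omega)

theorem abs_eval_le_of_abs_le (p : MvPolynomial σ ℝ) {N : ℕ} (hN : p.totalDegree ≤ N)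
    {x : σ → ℝ} {B : ℝ} (hB : 1 ≤ B) (hx : ∀ i, |x i| ≤ B) :
    |eval x p| ≤ (∑ m ∈ p.support, |coeff m p|) * B ^ N := by
  rw [eval_eq, Finset.sum_mul]
  refine (Finset.abs_sum_le_sum_abs _ _).trans (Finset.sum_le_sum fun m hm => ?_)
  rw [abs_mul]
  gcongr
  calc |∏ i ∈ m.support, x i ^ m i| = ∏ i ∈ m.support, |x i| ^ m i := by
        simp only [Finset.abs_prod, abs_pow]
    _ ≤ ∏ i ∈ m.support, B ^ m i := by gcongr with i; exact hx i
    _ = B ^ (m.sum fun _ e => e) := Finset.prod_pow_eq_pow_sum _ _ _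
    _ ≤ B ^ N := pow_le_pow_right₀ hB ((le_totalDegree hm).trans hN)

theorem abs_eval_euclidean_le {ι : Type*} [Fintype ι] (p : MvPolynomial ι ℝ) {N : ℕ}
    (hN : p.totalDegree ≤ N) (x : EuclideanSpace ℝ ι) :
    |eval (fun i => x i) p| ≤ (∑ m ∈ p.support, |coeff m p|) * (‖x‖ + 1) ^ N :=
  abs_eval_le_of_abs_le p hN (by linarith [norm_nonneg x]) fun i =>
    (PiLp.norm_apply_le x i).trans (by linarith)

end MvPolynomial

section Cone

variable {E : Type*} [NormedAddCommGroup E] [NormedSpace ℝ E]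

theorem exists_norm_eq_one_apply_ne_zero {g : E → ℝ} {d : ℕ} (hd : d ≠ 0)
    (hg : ∀ (t : ℝ) x, g (t • x) = t ^ d * g x) {y : E} (hy : g y ≠ 0) :
    ∃ v, ‖v‖ = 1 ∧ g v ≠ 0 := by
  have hy0 : y ≠ 0 := by
    rintro rfl
    apply hy
    simpa [zero_pow hd] using hg 0 0
  refine ⟨‖y‖⁻¹ • y, norm_smul_inv_norm hy0, ?_⟩
  rw [hg]
  exact mul_ne_zero (by positivity) hy

theorem exists_lower_bound_on_cone {g : E → ℝ} (hcont : Continuous g) {d : ℕ}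
    (hg : ∀ (t : ℝ) x, g (t • x) = t ^ d * g x) {v : E} (hv : g v ≠ 0) :
    ∃ c > 0, ∃ ε > 0, ∀ t > 0, ∀ x ∈ ball (t • v) (ε * t), c * t ^ d ≤ |g x| := by
  have hc : 0 < |g v| / 2 := by positivity
  obtain ⟨ε, hε, hball⟩ := Metric.isOpen_iff.mp (isOpen_lt continuous_const hcont.abs) v
    (show |g v| / 2 < |g v| by linarith)
  refine ⟨|g v| / 2, hc, ε, hε, fun t ht x hx => ?_⟩
  have hy : t⁻¹ • x ∈ ball v ε := by
    rw [mem_ball, dist_eq_norm] at hx ⊢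
    rw [show t⁻¹ • x - v = t⁻¹ • (x - t • v) by
      rw [smul_sub, smul_smul, inv_mul_cancel₀ ht.ne', one_smul], norm_smul,
      Real.norm_of_nonneg (inv_nonneg.2 ht.le)]
    calc t⁻¹ * ‖x - t • v‖ < t⁻¹ * (ε * t) := by gcongr
      _ = ε := by field_simp
  have hx' : g x = t ^ d * g (t⁻¹ • x) := by
    rw [← hg, smul_smul, mul_inv_cancel₀ ht.ne', one_smul]
  rw [hx', abs_mul, abs_of_pos (pow_pos ht d), mul_comm]
  exact mul_le_mul_of_nonneg_left (hball hy).le (pow_nonneg ht.le d)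

theorem norm_le_of_mem_ball_smul {v x : E} (hv : ‖v‖ = 1) {t r : ℝ} (ht : 0 ≤ t)
    (hx : x ∈ ball (t • v) (r * t)) : ‖x‖ ≤ (1 + r) * t := by
  rw [mem_ball, dist_eq_norm] at hx
  calc ‖x‖ ≤ ‖t • v‖ + ‖x - t • v‖ := norm_le_insert' x (t • v)
    _ ≤ t + r * t := by rw [norm_smul, hv, Real.norm_of_nonneg ht, mul_one]; linarith
    _ = (1 + r) * t := by ring

theorem exists_lower_bound_add_on_cone {g h : E → ℝ} {v : E} (hv : ‖v‖ = 1) {d : ℕ}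
    (hd : d ≠ 0) {c r K : ℝ} (hc : 0 < c) (hr : r ≤ 1)
    (hg : ∀ t > 0, ∀ x ∈ ball (t • v) (r * t), c * t ^ d ≤ |g x|)
    (hh : ∀ x, |h x| ≤ K * (‖x‖ + 1) ^ (d - 1)) :
    ∃ T ≥ 1, ∀ t ≥ T, ∀ x ∈ ball (t • v) (r * t), c / 2 ^ (d + 1) * ‖x‖ ^ d ≤ |g x + h x| := by
  have hK : 0 ≤ K := by simpa using (abs_nonneg _).trans (hh 0)
  refine ⟨max 1 (2 * 3 ^ (d - 1) * K / c), le_max_left _ _, fun t ht x hx => ?_⟩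
  have ht1 : 1 ≤ t := (le_max_left _ _).trans ht
  have htK : 3 ^ (d - 1) * K ≤ c / 2 * t := by
    have := (le_max_right _ _).trans ht
    rw [div_le_iff₀ hc] at this
    linarith
  have hx2 : ‖x‖ ≤ 2 * t := (norm_le_of_mem_ball_smul hv (by linarith) hx).trans (by nlinarith)
  have hhx : |h x| ≤ c / 2 * t ^ d := calc
    |h x| ≤ K * (‖x‖ + 1) ^ (d - 1) := hh x
    _ ≤ K * (3 * t) ^ (d - 1) := by gcongr; linarith
    _ = (3 ^ (d - 1) * K) * t ^ (d - 1) := by ring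
    _ ≤ (c / 2 * t) * t ^ (d - 1) := by gcongr
    _ = c / 2 * t ^ d := by rw [mul_assoc, ← pow_succ', Nat.sub_add_cancel (by omega)]
  calc c / 2 ^ (d + 1) * ‖x‖ ^ d ≤ c / 2 ^ (d + 1) * (2 * t) ^ d := by gcongr
    _ = c * t ^ d - c / 2 * t ^ d := by rw [mul_pow, pow_succ]; field_simp; ring
    _ ≤ |g x| - |h x| := sub_le_sub (hg t (by linarith) x hx) hhx
    _ ≤ |g x + h x| := abs_sub_abs_le_abs_add _ _

end Cone

theorem SCone.of_cone {n : ℕ} {ψ : EuclideanSpace ℝ (Fin n) → ℝ} {s C c₁ r₀ T : ℝ}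
    {v : EuclideanSpace ℝ (Fin n)} (hv : ‖v‖ = 1) (hC : 0 < C) (hc₁ : 0 < c₁) (hr₀ : 0 < r₀)
    (hr₀1 : r₀ < 1) (hT : 1 ≤ T) (hupper : ∀ x, |ψ x| ≤ C * (‖x‖ + 1) ^ s)
    (hlower : ∀ t ≥ T, ∀ x ∈ ball (t • v) (r₀ * t), c₁ * ‖x‖ ^ s ≤ |ψ x|) : SCone n ψ s := by
  have hT' : ∀ i : ℕ, T ≤ T + i := fun i => le_add_of_nonneg_right i.cast_nonneg
  have hnorm : ∀ i : ℕ, ‖(T + i) • v‖ = T + i := fun i => by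
    rw [norm_smul, hv, mul_one, Real.norm_of_nonneg (by linarith [hT' i])]
  refine ⟨C, c₁, r₀, fun i => (T + i) • v, hC, hc₁, hr₀, hr₀1, fun i => ?_, ?_, hupper,
    fun i x hx => ?_⟩
  · rw [hnorm]
    exact hT.trans (hT' i)
  · simp only [hnorm]
    exact tendsto_atTop_add_const_left _ _ tendsto_natCast_atTop_atTop
  · rw [hnorm] at hx
    exact hlower _ (hT' i) x hx

theorem polynomial_satisfies_scone (n : ℕ) (P : MvPolynomial (Fin n) ℝ)
    (hP : 0 < P.totalDegree) :
    SCone n (fun x => MvPolynomial.eval (fun i => x i) P) (P.totalDegree : ℝ) := by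
  set d := P.totalDegree
  set Q := homogeneousComponent d P
  have hR : (P - Q).totalDegree ≤ d - 1 := totalDegree_sub_homogeneousComponent_le P
  have hQ : Q ≠ 0 := fun hQ => by rw [hQ, sub_zero] at hR; omega
  have hQhom : ∀ (t : ℝ) (x : EuclideanSpace ℝ (Fin n)),
      eval (fun i => (t • x) i) Q = t ^ d * eval (fun i => x i) Q := fun t x => by
    rw [← (homogeneousComponent_isHomogeneous d P).eval_smul]
    congr 2
  obtain ⟨y, hy⟩ : ∃ y : EuclideanSpace ℝ (Fin n), eval (fun i => y i) Q ≠ 0 := by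
    by_contra! h
    exact hQ (MvPolynomial.funext fun y => by simpa using h (WithLp.toLp 2 y))
  obtain ⟨v, hv1, hv⟩ := exists_norm_eq_one_apply_ne_zero
    (g := fun x : EuclideanSpace ℝ (Fin n) => eval (fun i => x i) Q) hP.ne' hQhom hy
  obtain ⟨c, hc, ε, hε, hQlow⟩ := exists_lower_bound_on_cone
    (g := fun x : EuclideanSpace ℝ (Fin n) => eval (fun i => x i) Q)
    ((continuous_eval Q).comp (PiLp.continuous_ofLp 2 _)) hQhom hv
  obtain ⟨T, hT, hPlow⟩ := exists_lower_bound_add_on_cone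
    (h := fun x : EuclideanSpace ℝ (Fin n) => eval (fun i => x i) (P - Q))
    hv1 hP.ne' hc (r := min ε (1 / 2)) ((min_le_right _ _).trans (by norm_num))
    (fun t ht x hx => hQlow t ht x (ball_subset_ball (by gcongr; exact min_le_left _ _) hx))
    (abs_eval_euclidean_le (P - Q) hR)
  refine SCone.of_cone hv1 (C := ∑ m ∈ P.support, |coeff m P| + 1) (c₁ := c / 2 ^ (d + 1))
    (r₀ := min ε (1 / 2)) (by positivity) (by positivity) (lt_min hε (by norm_num))
    (min_lt_of_right_lt (by norm_num)) hT (fun x => ?_) (fun t ht x hx => ?_)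
  · rw [Real.rpow_natCast]
    exact (abs_eval_euclidean_le P le_rfl x).trans (by gcongr; linarith)
  · simpa [Real.rpow_natCast] using hPlow t ht x hx
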